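/- Let k ≥ 3, a : Fin k → ℝ, m : ℝ, and let ω : Fin k → ℝ be a weight vector with ω ≠ 0. If the generalized operator annihilates the whole weighted sequence, i.e. T_{a,m}(P_{n,ω}) = 0 for all n ≥ 1, then a_j = 1 for all 1 ≤ j ≤ k and (m = 1 or m = 2). (The generalized operator D₁₁ − Σ_j a_j t_j D_{2j} − m D₂ has nonzero kernel on the WIP-module only for the original operators T_1 and T_2.) -/

import Mathlib

open MvPolynomial Finset

/-- The weight coefficient `A_ω(α)` of Theorem 2.1 (for `α ≠ 0`):
`A_ω(α) = multinomial(α) · (Σ α_i ω_i) / (Σ α_i)`. -/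
noncomputable def Aw {k : ℕ} (ω : Fin k → ℝ) (α : Fin k → ℕ) : ℝ :=
  (Nat.multinomial Finset.univ α : ℝ) * (∑ i, (α i : ℝ) * ω i) / (∑ i, (α i : ℝ))

/-- The isobaric degree `Σ_{i=1}^k i·α_i` of an exponent vector. -/
def isoDeg {k : ℕ} (α : Fin k → ℕ) : ℕ := ∑ i, (i.1 + 1) * α i

/-- The (finite) set of exponent vectors of isobaric degree `n`. -/
def wipIndex (k n : ℕ) : Finset (Fin k → ℕ) :=
  (Fintype.piFinset fun _ : Fin k => Finset.range (n + 1)).filter fun α => isoDeg α = n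

/-- The weighted isobaric polynomial `P_{n,ω} = Σ_α A_ω(α)·t^α`. -/
noncomputable def WIP (k n : ℕ) (ω : Fin k → ℝ) : MvPolynomial (Fin k) ℝ :=
  ∑ α ∈ wipIndex k n, MvPolynomial.monomial (Finsupp.equivFunOnFinite.symm α) (Aw ω α)

/-- The operator `T_m(P) = D₁₁P − Σ_j t_j D_{2j}P − m·D₂P`. -/
noncomputable def Tm (k : ℕ) (hk : 2 ≤ k) (m : ℝ) (P : MvPolynomial (Fin k) ℝ) :
    MvPolynomial (Fin k) ℝ :=
  pderiv (⟨0, by omega⟩ : Fin k) (pderiv (⟨0, by omega⟩ : Fin k) P)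
    - ∑ j : Fin k, X j * pderiv (⟨1, by omega⟩ : Fin k) (pderiv j P)
    - C m * pderiv (⟨1, by omega⟩ : Fin k) P

/-- The `j`-th element `γ^{(j)}` of the string generated by `γ`. -/
def strElem (k : ℕ) (hk : 2 ≤ k) (γ : Fin k → ℕ) (j : ℕ) : Fin k → ℕ :=
  fun i => if i = (⟨0, by omega⟩ : Fin k) then γ i + 2 * j
    else if i = (⟨1, by omega⟩ : Fin k) then γ i - j else γ i

/-- The `ω`-weighted string generated by `γ`:
`S_ω(γ) = Σ_{j=0}^{γ₂} A_ω(γ^{(j)})·t^{γ^{(j)}}`. -/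
noncomputable def strPoly (k : ℕ) (hk : 2 ≤ k) (ω : Fin k → ℝ) (γ : Fin k → ℕ) :
    MvPolynomial (Fin k) ℝ :=
  ∑ j ∈ Finset.range (γ (⟨1, by omega⟩ : Fin k) + 1),
    MvPolynomial.monomial (Finsupp.equivFunOnFinite.symm (strElem k hk γ j))
      (Aw ω (strElem k hk γ j))

/-- The generalized operator `T_{a,m}(P) = D₁₁P − Σ_j a_j t_j D_{2j}P − m·D₂P`. -/
noncomputable def Tam (k : ℕ) (hk : 2 ≤ k) (a : Fin k → ℝ) (m : ℝ)
    (P : MvPolynomial (Fin k) ℝ) : MvPolynomial (Fin k) ℝ :=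
  pderiv (⟨0, by omega⟩ : Fin k) (pderiv (⟨0, by omega⟩ : Fin k) P)
    - ∑ j : Fin k, C (a j) * X j * pderiv (⟨1, by omega⟩ : Fin k) (pderiv j P)
    - C m * pderiv (⟨1, by omega⟩ : Fin k) P

/-! In the coefficient of `t^β` in `T_{a,m}(P_{n,ω})`, `n = isoDeg β + 2`, only the monomials
`t^{β+2e₁}` and `t^{β+e₂}` of `P_{n,ω}` contribute. Since
`(β_i + 1)·A_ω(β + e_i) = multinomial(β)·(Σ_l β_l ω_l + ω_i)`, its vanishing says
`(|β| + 1)(Σ_l β_l ω_l + 2ω₁) = (Σ_j a_j β_j + m)(Σ_l β_l ω_l + ω₂)` for every `β`.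
For `β = 0, e_i, e_i + e_j` these relations combine to `ω_i + ω_j = a_i ω_j + a_j ω_i`,
which forces `a ≡ 1` as `ω ≠ 0`. Then `ω` is constant unless `m = 1`, and a constant nonzero
`ω` forces `m = 2`. -/

namespace MvPolynomial

variable {σ R : Type*} [CommSemiring R]

theorem pderiv_pderiv_comm (i j : σ) (p : MvPolynomial σ R) :
    pderiv i (pderiv j p) = pderiv j (pderiv i p) := by
  classical
  rcases eq_or_ne i j with rfl | hij
  · rfl
  ext s
  simp only [coeff_pderiv, add_right_comm s (Finsupp.single i 1), Finsupp.add_apply,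
    Finsupp.single_eq_of_ne hij, Finsupp.single_eq_of_ne hij.symm, add_zero]
  ring

theorem coeff_X_mul_pderiv (i : σ) (p : MvPolynomial σ R) (s : σ →₀ ℕ) :
    coeff s (X i * pderiv i p) = s i * coeff s p := by
  classical
  rw [coeff_X_mul']
  split_ifs with hi
  · have hi := Finsupp.mem_support_iff.1 hi
    rw [coeff_pderiv, Finsupp.sub_add_single_one_cancel hi, Finsupp.tsub_apply,
      Finsupp.single_eq_same, ← Nat.cast_add_one,
      Nat.sub_add_cancel (Nat.one_le_iff_ne_zero.2 hi), mul_comm]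
  · simp [Finsupp.notMem_support_iff.1 hi]

end MvPolynomial

theorem Nat.multinomial_add_single_mul {α : Type*} [DecidableEq α] {s : Finset α} {i : α}
    (hi : i ∈ s) (f : α → ℕ) :
    multinomial s (f + Pi.single i 1) * (f i + 1) = multinomial s f * (∑ l ∈ s, f l + 1) := by
  set g : α → ℕ := f + Pi.single i 1
  have hg : ∀ l ≠ i, g l = f l := fun l hl => by simp [g, hl]
  have hprod : ∏ l ∈ s, (g l).factorial = (f i + 1) * ∏ l ∈ s, (f l).factorial := by
    rw [← Finset.mul_prod_erase s _ hi, ← Finset.mul_prod_erase s (fun l => (f l).factorial) hi,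
      Finset.prod_congr rfl fun l hl => by rw [hg l (Finset.ne_of_mem_erase hl)]]
    simp [g, Nat.factorial_succ, mul_assoc]
  have hsum : ∑ l ∈ s, g l = ∑ l ∈ s, f l + 1 := by
    simp [g, Finset.sum_add_distrib, Finset.sum_pi_single', hi]
  apply Nat.eq_of_mul_eq_mul_left (Finset.prod_pos fun l _ => (f l).factorial_pos)
  calc (∏ l ∈ s, (f l).factorial) * (multinomial s g * (f i + 1))
      = (∏ l ∈ s, (g l).factorial) * multinomial s g := by rw [hprod]; ring
    _ = (∑ l ∈ s, f l).factorial * (∑ l ∈ s, f l + 1) := by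
        rw [multinomial_spec, hsum, Nat.factorial_succ, mul_comm]
    _ = (∏ l ∈ s, (f l).factorial) * (multinomial s f * (∑ l ∈ s, f l + 1)) := by
        rw [← multinomial_spec]; ring

open Finsupp (single)

theorem mem_wipIndex {k n : ℕ} (α : Fin k → ℕ) : α ∈ wipIndex k n ↔ isoDeg α = n := by
  refine ⟨fun h => (Finset.mem_filter.1 h).2, fun hα => Finset.mem_filter.2 ⟨?_, hα⟩⟩
  refine Fintype.mem_piFinset.2 fun i => Finset.mem_range_succ_iff.2 ?_
  calc α i ≤ (i.1 + 1) * α i := Nat.le_mul_of_pos_left _ i.1.succ_pos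
    _ ≤ isoDeg α := Finset.single_le_sum (f := fun l : Fin k => (l.1 + 1) * α l)
        (fun _ _ => Nat.zero_le _) (Finset.mem_univ i)
    _ = n := hα

theorem coeff_WIP {k n : ℕ} (ω : Fin k → ℝ) (s : Fin k →₀ ℕ) :
    coeff s (WIP k n ω) = if isoDeg ⇑s = n then Aw ω s else 0 := by
  simp only [WIP, coeff_sum, coeff_monomial, Equiv.symm_apply_eq, ← mem_wipIndex]
  exact Finset.sum_ite_eq' _ _ _

theorem isoDeg_add_single {k : ℕ} (s : Fin k →₀ ℕ) (i : Fin k) (c : ℕ) :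
    isoDeg ⇑(s + single i c) = isoDeg ⇑s + (i.1 + 1) * c := by
  simp [isoDeg, mul_add, Finset.sum_add_distrib, Finsupp.single_apply]

theorem sum_add_single_mul {k : ℕ} (s : Fin k →₀ ℕ) (i : Fin k) (f : Fin k → ℝ) :
    ∑ l, ((s + single i 1 : Fin k →₀ ℕ) l : ℝ) * f l
      = ∑ l, (s l : ℝ) * f l + f i := by
  simp [add_mul, Finset.sum_add_distrib, Finsupp.single_apply]

theorem sum_add_single {k : ℕ} (s : Fin k →₀ ℕ) (i : Fin k) :
    ∑ l, ((s + single i 1 : Fin k →₀ ℕ) l : ℝ) = ∑ l, (s l : ℝ) + 1 := by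
  simpa using sum_add_single_mul s i 1

theorem coeff_Tam {k : ℕ} (hk : 2 ≤ k) (a : Fin k → ℝ) (m : ℝ)
    (P : MvPolynomial (Fin k) ℝ) (s : Fin k →₀ ℕ) :
    coeff s (Tam k hk a m P) =
      (s ⟨0, by omega⟩ + 1) * (s ⟨0, by omega⟩ + 2)
          * coeff (s + single ⟨0, by omega⟩ 2) P
        - (∑ j, a j * s j + m) * (s ⟨1, by omega⟩ + 1)
          * coeff (s + single ⟨1, by omega⟩ 1) P := by
  have hmix : ∀ j, C (a j) * X j * pderiv ⟨1, by omega⟩ (pderiv j P)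
      = C (a j) * (X j * pderiv j (pderiv ⟨1, by omega⟩ P)) := fun j => by
    rw [mul_assoc, pderiv_pderiv_comm]
  simp only [Tam, hmix, coeff_sub, coeff_sum, coeff_C_mul, coeff_X_mul_pderiv, coeff_pderiv,
    Finsupp.add_apply, Finsupp.single_eq_same, add_assoc, ← Finsupp.single_add,
    one_add_one_eq_two]
  rw [show ∀ c : ℝ, ∑ j, a j * (s j * c) = (∑ j, a j * s j) * c from fun c => by
    simp only [Finset.sum_mul, mul_assoc]]
  push_cast
  ring

theorem multinomial_add_single {k : ℕ} (s : Fin k →₀ ℕ) (i : Fin k) :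
    (Nat.multinomial Finset.univ ⇑(s + single i 1 : Fin k →₀ ℕ) : ℝ) * (s i + 1)
      = Nat.multinomial Finset.univ ⇑s * (∑ l, (s l : ℝ) + 1) := by
  rw [Finsupp.coe_add, Finsupp.single_eq_pi_single]
  exact_mod_cast Nat.multinomial_add_single_mul (Finset.mem_univ i) s

theorem Aw_add_single {k : ℕ} (ω : Fin k → ℝ) (s : Fin k →₀ ℕ) (i : Fin k) :
    (s i + 1) * Aw ω ⇑(s + single i 1 : Fin k →₀ ℕ)
      = Nat.multinomial Finset.univ ⇑s * (∑ l, (s l : ℝ) * ω l + ω i) := by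
  have hS : (∑ l, (s l : ℝ)) + 1 ≠ 0 := by positivity
  rw [Aw, sum_add_single_mul, sum_add_single]
  field_simp
  linear_combination (∑ l, (s l : ℝ) * ω l + ω i) * multinomial_add_single s i

theorem weight_relation_of_Tam_WIP_eq_zero {k : ℕ} (hk : 2 ≤ k) {a : Fin k → ℝ} {m : ℝ}
    {ω : Fin k → ℝ} (h : ∀ n, 1 ≤ n → Tam k hk a m (WIP k n ω) = 0)
    (β : Fin k →₀ ℕ) :
    (∑ l, (β l : ℝ) + 1) * (∑ l, (β l : ℝ) * ω l + 2 * ω ⟨0, by omega⟩)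
      = (∑ j, a j * β j + m) * (∑ l, (β l : ℝ) * ω l + ω ⟨1, by omega⟩) := by
  have hcoeff := congrArg (coeff β) (h (isoDeg β + 2) (by omega))
  rw [coeff_Tam, coeff_WIP, coeff_WIP, if_pos (by rw [isoDeg_add_single]; rfl),
    if_pos (by rw [isoDeg_add_single]; rfl), coeff_zero] at hcoeff
  set i₀ : Fin k := ⟨0, by omega⟩
  set i₁ : Fin k := ⟨1, by omega⟩
  set M : ℝ := (Nat.multinomial Finset.univ ⇑β : ℝ)
  have hA₀ :
      ((β i₀ : ℝ) + 1) * (β i₀ + 2) * Aw ω ⇑(β + single i₀ 2 : Fin k →₀ ℕ)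
      = M * (∑ l, (β l : ℝ) + 1) * (∑ l, (β l : ℝ) * ω l + 2 * ω i₀) := by
    have hA := Aw_add_single ω (β + single i₀ 1) i₀
    rw [add_assoc, ← Finsupp.single_add, one_add_one_eq_two, sum_add_single_mul] at hA
    simp only [Finsupp.add_apply, Finsupp.single_eq_same, Nat.cast_add, Nat.cast_one] at hA
    linear_combination ((β i₀ : ℝ) + 1) * hA
      + (∑ l, (β l : ℝ) * ω l + 2 * ω i₀) * multinomial_add_single β i₀
  have hM : M ≠ 0 := Nat.cast_ne_zero.2 (Nat.multinomial_pos _ _).ne'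
  apply mul_left_cancel₀ hM
  linear_combination hcoeff - hA₀ + (∑ j, a j * β j + m) * Aw_add_single ω β i₁

theorem eq_one_of_add_eq_mul_add_mul {ι : Type*} {ω a : ι → ℝ} (hω : ω ≠ 0)
    (h : ∀ i j, ω i + ω j = a i * ω j + a j * ω i) (j : ι) : a j = 1 := by
  by_cases hj : ω j = 0
  · obtain ⟨i, hi⟩ := Function.ne_iff.1 hω
    exact mul_right_cancel₀ hi (by linear_combination -(h i j) + (1 - a i) * hj)
  · exact mul_right_cancel₀ hj (by linear_combination -(h j j) / 2)

theorem eq_one_or_eq_two_of_weight_relations {ι : Type*} {ω : ι → ℝ} {m : ℝ}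
    (hω : ω ≠ 0) {i₀ i₁ : ι} (h₀ : 2 * ω i₀ = m * ω i₁)
    (h₁ : ∀ i, 2 * (ω i + 2 * ω i₀) = (1 + m) * (ω i + ω i₁)) :
    m = 1 ∨ m = 2 := by
  refine or_iff_not_imp_left.2 fun hm => ?_
  have hconst : ∀ i, ω i = ω i₁ := fun i =>
    mul_left_cancel₀ (sub_ne_zero.2 hm) (by linear_combination 2 * h₀ - h₁ i)
  have hω₁ : ω i₁ ≠ 0 := fun h => hω (funext fun i => (hconst i).trans h)
  exact mul_right_cancel₀ hω₁ (by linear_combination -h₀ + 2 * hconst i₀)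

/-- Theorem 4.3: the generalized operator `T_{a,m}` annihilates a nontrivial weighted
sequence only when `a_j = 1` for all `j` and `m = 1` or `m = 2`. -/
theorem generalized_operator_kernel (k : ℕ) (hk : 3 ≤ k) (a : Fin k → ℝ) (m : ℝ)
    (ω : Fin k → ℝ) (hω : ω ≠ 0)
    (h : ∀ n, 1 ≤ n → Tam k (by omega) a m (WIP k n ω) = 0) :
    (∀ j, a j = 1) ∧ (m = 1 ∨ m = 2) := by
  have rel := weight_relation_of_Tam_WIP_eq_zero (by omega) h
  have e₀ := rel 0
  have e₁ := fun i => rel (single i 1)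
  have e₂ := fun i j => rel (single i 1 + single j 1)
  simp only [Finsupp.coe_zero, Pi.zero_apply, CharP.cast_eq_zero, Finset.sum_const_zero,
    zero_add, zero_mul, one_mul, mul_zero, Finsupp.single_apply, Nat.cast_ite, Nat.cast_one,
    Finset.sum_ite_eq, Finset.mem_univ, ↓reduceIte, ite_mul, mul_add, add_mul, mul_ite, mul_one,
    Finsupp.coe_add, Pi.add_apply, Nat.cast_add, Finset.sum_add_distrib] at e₀ e₁ e₂
  have ha := eq_one_of_add_eq_mul_add_mul (a := a) hω fun i j => by
    linear_combination e₂ i j - e₁ i - e₁ j + e₀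
  refine ⟨ha, eq_one_or_eq_two_of_weight_relations hω e₀ fun i => ?_⟩
  linear_combination e₁ i + (ω i + ω ⟨1, by omega⟩) * ha i
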